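/- arXiv:1904.04519 — 2 statements merged into one kernel-verified Lean document; each statement's English description precedes it below -/
import Mathlib

section
/- Every d-collapsible simplicial complex K is d-Leray: for every induced subcomplex L of K and every j ≥ d, the reduced simplicial homology group H̃_j(L) vanishes. -/
variable {V : Type*} [Fintype V] [LinearOrder V]

open Finset

/-- `W` dominates the set `A` in `G`: every vertex of `A` is in `W` or adjacent to a vertex of `W`. -/
def Dominates (G : SimpleGraph V) (W A : Finset V) : Prop :=
  ∀ a ∈ A, a ∈ W ∨ ∃ w ∈ W, G.Adj w a

/-- `I` is an independent set of `G`. -/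
def IndepSet (G : SimpleGraph V) (I : Finset V) : Prop :=
  ∀ u ∈ I, ∀ v ∈ I, ¬ G.Adj u v

instance (G : SimpleGraph V) [DecidableRel G.Adj] (I : Finset V) :
    Decidable (IndepSet G I) := by unfold IndepSet; infer_instance

/-- The domination number of `G`. -/
noncomputable def gamma (G : SimpleGraph V) : ℕ :=
  sInf {k | ∃ W : Finset V, W.card = k ∧ Dominates G W Finset.univ}

/-- The independence domination number of `G`. -/
noncomputable def igamma (G : SimpleGraph V) : ℕ :=
  sInf {k | ∀ I : Finset V, IndepSet G I → ∃ W : Finset V, W.card ≤ k ∧ Dominates G W I}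

/-- The noncover complex of `G`: faces are the vertex sets whose complement is not independent. -/
def NC (G : SimpleGraph V) [DecidableRel G.Adj] : Finset (Finset V) :=
  Finset.univ.filter fun W => ¬ IndepSet G Wᶜ

/-- The independence complex of `G`. -/
def IndComplex (G : SimpleGraph V) [DecidableRel G.Adj] : Finset (Finset V) :=
  Finset.univ.filter fun I => IndepSet G I

/-- The combinatorial Alexander dual of a complex on the full vertex set `V`. -/
def AlexDual (K : Finset (Finset V)) : Finset (Finset V) :=
  Finset.univ.filter fun s => sᶜ ∉ K

/-- `K` is a simplicial complex (downward closed family of finite sets). -/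
def IsComplex (K : Finset (Finset V)) : Prop :=
  ∀ σ ∈ K, ∀ τ ⊆ σ, τ ∈ K

/-- `s` is a maximal face (facet) of `K`. -/
def IsMaxFace (K : Finset (Finset V)) (s : Finset V) : Prop :=
  s ∈ K ∧ ∀ t ∈ K, s ⊆ t → t = s

/-- `σ` is a free face of `K`: a face contained in a unique maximal face. -/
def IsFreeFace (K : Finset (Finset V)) (σ : Finset V) : Prop :=
  σ ∈ K ∧ ∃ τ ∈ K, σ ⊆ τ ∧ ∀ ρ ∈ K, σ ⊆ ρ → ρ ⊆ τ

/-- `K'` is obtained from `K` by an elementary `d`-collapse. -/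
def ElemCollapse (d : ℕ) (K K' : Finset (Finset V)) : Prop :=
  ∃ σ : Finset V, IsFreeFace K σ ∧ σ.card ≤ d ∧ K' = K.filter fun ρ => ¬ σ ⊆ ρ

/-- `K` is `d`-collapsible. -/
def Collapsible (d : ℕ) (K : Finset (Finset V)) : Prop :=
  Relation.ReflTransGen (ElemCollapse d) K ∅

/-- chordality -/
def IsChordal (G : SimpleGraph V) : Prop :=
  ∀ (u : V) (c : G.Walk u u), c.IsCycle → 4 ≤ c.length →
    ∃ x ∈ c.support, ∃ y ∈ c.support, G.Adj x y ∧ s(x, y) ∉ c.edges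

/-- simplicial vertex -/
def IsSimplicialVtx (G : SimpleGraph V) (v : V) : Prop :=
  ∀ x y : V, G.Adj v x → G.Adj v y → x ≠ y → G.Adj x y

/-- The group of simplicial `ℤ`-chains of `K` supported on faces of cardinality `k`. -/
abbrev chainC (K : Finset (Finset V)) (k : ℕ) : Type _ :=
  {s : Finset V // s ∈ K ∧ s.card = k} → ℤ

/-- The simplicial boundary map from chains on faces of cardinality `k+1`
to chains on faces of cardinality `k` (for `k = 0` this is the augmentation map,
so the associated homology is reduced homology). -/
noncomputable def bdry (K : Finset (Finset V)) (k : ℕ) :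
    chainC K (k + 1) →ₗ[ℤ] chainC K k where
  toFun c t :=
    ∑ s : {s : Finset V // s ∈ K ∧ s.card = k + 1},
      if t.1 ⊆ s.1 then
        (∑ v ∈ s.1 \ t.1, (-1 : ℤ) ^ (t.1.filter (· < v)).card) * c s
      else 0
  map_add' c c' := by
    funext t
    simp only [Pi.add_apply]
    rw [← Finset.sum_add_distrib]
    exact Finset.sum_congr rfl fun s _ => by split <;> ring
  map_smul' r c := by
    funext t
    simp only [Pi.smul_apply, smul_eq_mul, RingHom.id_apply]
    rw [Finset.mul_sum]
    exact Finset.sum_congr rfl fun s _ => by split <;> ring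

/-- The reduced simplicial homology of `K` (with `ℤ` coefficients) in dimension `j ≥ 0`:
cycles of dimension `j` (faces of cardinality `j+1`) modulo boundaries. -/
noncomputable abbrev rHomology (K : Finset (Finset V)) (j : ℕ) :=
  LinearMap.ker (bdry K j) ⧸
    (LinearMap.range (bdry K (j + 1))).comap (LinearMap.ker (bdry K j)).subtype

/-- Vanishing of the reduced simplicial homology `H̃_j(K)` with `ℤ` coefficients,
for an arbitrary integer dimension `j` (trivial for `j ≤ -2`). -/
def RHomVanishes (K : Finset (Finset V)) (j : ℤ) : Prop :=
  if j ≤ -2 then True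
  else if j = -1 then ∀ c : chainC K 0, ∃ b : chainC K 1, bdry K 0 b = c
  else ∀ c : chainC K (j.toNat + 1), bdry K j.toNat c = 0 →
    ∃ b : chainC K (j.toNat + 2), bdry K (j.toNat + 1) b = c

/-!
Induced subcomplexes of a `d`-collapsible complex are `d`-collapsible: restricting an elementary
`d`-collapse to `U` is again one or changes nothing. So it suffices to see that an elementary
collapse `K ↘ K'`, removing the star of a free face `σ` with `#σ ≤ d ≤ j`, cannot create
`j`-homology. If `σ` is maximal, the star has no faces of cardinality `j + 1`. Otherwise, for
`v ∈ τ \ σ` (with `τ` the facet above `σ`), the star of `σ` is a cone with apex `v`; subtracting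
from a `j`-cycle the boundary of its cone over `v` kills it on the star, leaving a cycle of `K'`,
which is a boundary in `K'` by induction.
-/

section

variable {α : Type*} [LinearOrder α]

/-- The coefficient of `t` in the boundary of `s ⊇ t`, as in `bdry`. -/
def incidence (t s : Finset α) : ℤ :=
  ∑ v ∈ s \ t, (-1 : ℤ) ^ #{x ∈ t | x < v}

theorem incidence_insert {t : Finset α} {v : α} (hv : v ∉ t) :
    incidence t (insert v t) = (-1) ^ #{x ∈ t | x < v} := by
  rw [incidence, insert_sdiff_cancel hv, sum_singleton]

theorem incidence_insert_ne_zero {t : Finset α} {v : α} (hv : v ∉ t) :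
    incidence t (insert v t) ≠ 0 := by
  rw [incidence_insert hv]
  exact pow_ne_zero _ (by norm_num)

theorem incidence_insert_mul_self {t : Finset α} {v : α} (hv : v ∉ t) :
    incidence t (insert v t) * incidence t (insert v t) = 1 := by
  rw [incidence_insert hv, ← pow_add, Even.neg_one_pow ⟨_, rfl⟩]

theorem incidence_insert_mul_incidence_add_swap {t u : Finset α} {a b : α} (ha : a ∉ t)
    (hb : b ∉ t) (hab : a ≠ b) (hu : insert b (insert a t) = u) :
    incidence t (insert a t) * incidence (insert a t) u +
      incidence t (insert b t) * incidence (insert b t) u = 0 := by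
  wlog hlt : a < b generalizing a b
  · rw [add_comm]
    exact this hb ha hab.symm (by rw [← hu, insert_comm]) (hab.lt_or_gt.resolve_left hlt)
  have hba : b ∉ insert a t := by simp [hb, hab.symm]
  have hab' : a ∉ insert b t := by simp [ha, hab]
  rw [← hu, incidence_insert hba, insert_comm b a t, incidence_insert hab', incidence_insert ha,
    incidence_insert hb, filter_insert, filter_insert, if_pos hlt, if_neg hlt.not_gt,
    card_insert_of_notMem (by simp [ha]), pow_succ]
  ring

theorem sum_incidence_insert_mul_incidence {t u : Finset α} (htu : t ⊆ u)
    (hcard : #u = #t + 2) :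
    ∑ a ∈ u \ t, incidence t (insert a t) * incidence (insert a t) u = 0 := by
  obtain ⟨a, b, hab, hdiff⟩ := card_eq_two.1 (by rw [card_sdiff_of_subset htu]; omega)
  have hu : insert b (insert a t) = u := by
    rw [← union_sdiff_of_subset htu, hdiff]
    ext
    simp only [mem_insert, mem_union, mem_singleton]
    tauto
  have hat : a ∉ t := (mem_sdiff.1 (hdiff ▸ mem_insert_self a {b})).2
  have hbt : b ∉ t := (mem_sdiff.1 (hdiff ▸ mem_insert_of_mem (mem_singleton_self b))).2
  rw [hdiff, sum_pair hab]
  exact incidence_insert_mul_incidence_add_swap hat hbt hab hu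

/-- `bdry` on chains extended by arbitrary values off `K`, so that chains of a complex and of
its subcomplexes live in one module. -/
def boundary (K : Finset (Finset α)) (k : ℕ) : (Finset α → ℤ) →ₗ[ℤ] Finset α → ℤ where
  toFun f t := ∑ s ∈ K with #s = k + 1 ∧ t ⊆ s, incidence t s * f s
  map_add' f g := by
    ext t
    simp only [Pi.add_apply, mul_add, sum_add_distrib]
  map_smul' r f := by
    ext t
    simp only [Pi.smul_apply, smul_eq_mul, mul_sum, RingHom.id_apply, mul_left_comm]

theorem boundary_apply (K : Finset (Finset α)) (k : ℕ) (f : Finset α → ℤ) (t : Finset α) :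
    boundary K k f t = ∑ s ∈ K with #s = k + 1 ∧ t ⊆ s, incidence t s * f s :=
  rfl

theorem boundary_congr {K : Finset (Finset α)} {k : ℕ} {f g : Finset α → ℤ}
    (h : ∀ s ∈ K, #s = k + 1 → f s = g s) (t : Finset α) :
    boundary K k f t = boundary K k g t := by
  refine sum_congr rfl fun s hs => ?_
  rw [h s (mem_filter.1 hs).1 (mem_filter.1 hs).2.1]

theorem boundary_filter {K : Finset (Finset α)} {p : Finset α → Prop} [DecidablePred p] {k : ℕ}
    {f : Finset α → ℤ} (hf : ∀ s ∈ K, #s = k + 1 → ¬ p s → f s = 0) (t : Finset α) :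
    boundary (K.filter p) k f t = boundary K k f t := by
  refine sum_subset (fun s hs => ?_) fun s hs hs' => ?_
  · simp only [mem_filter] at hs ⊢
    exact ⟨hs.1.1, hs.2⟩
  · simp only [mem_filter] at hs hs'
    rw [hf s hs.1 hs.2.1 fun hp => hs' ⟨⟨hs.1, hp⟩, hs.2⟩, mul_zero]

theorem filter_between_eq_image {K : Finset (Finset α)} (hK : IsComplex K) {k : ℕ}
    {t u : Finset α} (ht : #t = k) (hu : u ∈ K) (htu : t ⊆ u) :
    {s ∈ K | (#s = k + 1 ∧ t ⊆ s) ∧ s ⊆ u} = (u \ t).image (insert · t) := by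
  ext s
  simp only [mem_filter, mem_image, mem_sdiff]
  constructor
  · rintro ⟨-, ⟨hs, hts⟩, hsu⟩
    obtain ⟨a, hat, rfl⟩ := exists_eq_insert_iff.2 ⟨hts, by omega⟩
    exact ⟨a, ⟨hsu (mem_insert_self a t), hat⟩, rfl⟩
  · rintro ⟨a, ⟨hau, hat⟩, rfl⟩
    have hsu : insert a t ⊆ u := insert_subset hau htu
    exact ⟨hK u hu _ hsu, ⟨by rw [card_insert_of_notMem hat, ht], subset_insert a t⟩, hsu⟩

theorem boundary_boundary {K : Finset (Finset α)} (hK : IsComplex K) {k : ℕ}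
    (g : Finset α → ℤ) {t : Finset α} (ht : #t = k) :
    boundary K k (boundary K (k + 1) g) t = 0 := by
  simp only [boundary_apply, mul_sum]
  rw [sum_comm' (t' := {u ∈ K | #u = k + 1 + 1 ∧ t ⊆ u})
    (s' := fun u => {s ∈ K | (#s = k + 1 ∧ t ⊆ s) ∧ s ⊆ u}) (fun s u => ?_)]
  · refine sum_eq_zero fun u hu => ?_
    obtain ⟨hu, hcard, htu⟩ := mem_filter.1 hu
    have hinj : Set.InjOn (insert · t) ↑(u \ t) := fun a ha b hb hab =>
      (insert_inj (mem_sdiff.1 ha).2).1 hab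
    simp_rw [filter_between_eq_image hK ht hu htu, sum_image hinj, ← mul_assoc, ← sum_mul,
      sum_incidence_insert_mul_incidence htu (by omega), zero_mul]
  · simp only [mem_filter]
    exact ⟨fun ⟨⟨hs, hsc, hts⟩, hu, huc, hsu⟩ => ⟨⟨hs, ⟨hsc, hts⟩, hsu⟩, hu, huc, hts.trans hsu⟩,
      fun ⟨⟨hs, ⟨hsc, hts⟩, hsu⟩, hu, huc, _⟩ => ⟨⟨hs, hsc, hts⟩, hu, huc, hsu⟩⟩

def IsCycle (K : Finset (Finset α)) (j : ℕ) (f : Finset α → ℤ) : Prop :=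
  ∀ t ∈ K, #t = j → boundary K j f t = 0

/-- `H̃_j(K) = 0`, phrased on chains extended by arbitrary values off `K`. -/
def IsAcyclicAt (K : Finset (Finset α)) (j : ℕ) : Prop :=
  ∀ f, IsCycle K j f → ∃ g, ∀ s ∈ K, #s = j + 1 → boundary K (j + 1) g s = f s

theorem isAcyclicAt_empty (j : ℕ) : IsAcyclicAt (∅ : Finset (Finset α)) j :=
  fun _ _ => ⟨0, fun _ hs => absurd hs (notMem_empty _)⟩

def cone (v : α) (f : Finset α → ℤ) (s : Finset α) : ℤ :=
  if v ∈ s then incidence (s.erase v) s * f (s.erase v) else 0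

theorem boundary_cone_of_notMem {K : Finset (Finset α)} {k : ℕ} {v : α} {ρ : Finset α}
    (hvρ : v ∉ ρ) (hρ : #ρ = k) (hvρK : insert v ρ ∈ K) (f : Finset α → ℤ) :
    boundary K k (cone v f) ρ = f ρ := by
  rw [boundary_apply, sum_eq_single_of_mem (insert v ρ)
    (mem_filter.2 ⟨hvρK, by rw [card_insert_of_notMem hvρ, hρ], subset_insert v ρ⟩)]
  · rw [cone, if_pos (mem_insert_self v ρ), erase_insert hvρ, ← mul_assoc,
      incidence_insert_mul_self hvρ, one_mul]
  · intro s hs hne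
    obtain ⟨-, hs, hρs⟩ := mem_filter.1 hs
    have hvs : v ∉ s := fun hvs => hne (eq_of_subset_of_card_le (insert_subset hvs hρs)
      (by rw [card_insert_of_notMem hvρ]; omega)).symm
    rw [cone, if_neg hvs, mul_zero]

theorem IsCycle.eq_zero_on_star {K : Finset (Finset α)} (hK : IsComplex K) {j : ℕ}
    {σ : Finset α} {v : α} (hvσ : v ∉ σ) {f : Finset α → ℤ} (hf : IsCycle K j f)
    (hfv : ∀ ρ ∈ K, #ρ = j + 1 → σ ⊆ ρ → v ∉ ρ → f ρ = 0) :
    ∀ ρ ∈ K, #ρ = j + 1 → σ ⊆ ρ → f ρ = 0 := by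
  intro ρ hρ hρc hσρ
  by_cases hvρ : v ∉ ρ
  · exact hfv ρ hρ hρc hσρ hvρ
  obtain ⟨t, hvt, rfl⟩ : ∃ t, v ∉ t ∧ insert v t = ρ :=
    ⟨ρ.erase v, notMem_erase v ρ, insert_erase (not_not.1 hvρ)⟩
  have hσt : σ ⊆ t := (subset_insert_iff_of_notMem hvσ).1 hσρ
  rw [card_insert_of_notMem hvt] at hρc
  have h0 := hf t (hK _ hρ t (subset_insert v t)) (by omega)
  rw [boundary_apply, sum_eq_single_of_mem (insert v t)
    (mem_filter.2 ⟨hρ, by rw [card_insert_of_notMem hvt, hρc], subset_insert v t⟩)] at h0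
  · exact (mul_eq_zero.1 h0).resolve_left (incidence_insert_ne_zero hvt)
  · intro s hs hne
    obtain ⟨hs, hsc, hts⟩ := mem_filter.1 hs
    have hvs : v ∉ s := fun hvs => hne (eq_of_subset_of_card_le (insert_subset hvs hts)
      (by rw [card_insert_of_notMem hvt]; omega)).symm
    rw [hfv s hs hsc (hσt.trans hts) hvs, mul_zero]

theorem IsCycle.boundary_cone_eq_on_star {K : Finset (Finset α)} (hK : IsComplex K) {j : ℕ}
    {σ : Finset α} {v : α} (hvσ : v ∉ σ) (hcone : ∀ ρ ∈ K, σ ⊆ ρ → insert v ρ ∈ K)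
    {f : Finset α → ℤ} (hf : IsCycle K j f) :
    ∀ ρ ∈ K, #ρ = j + 1 → σ ⊆ ρ → boundary K (j + 1) (cone v f) ρ = f ρ := by
  have hcyc : IsCycle K j (f - boundary K (j + 1) (cone v f)) := fun t ht htc => by
    rw [map_sub, Pi.sub_apply, hf t ht htc, boundary_boundary hK _ htc, sub_zero]
  have hzero := hcyc.eq_zero_on_star hK hvσ fun ρ hρ hρc hσρ hvρ => by
    rw [Pi.sub_apply, boundary_cone_of_notMem hvρ hρc (hcone ρ hρ hσρ), sub_self]
  exact fun ρ hρ hρc hσρ => (sub_eq_zero.1 (hzero ρ hρ hρc hσρ)).symm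

theorem IsCycle.exists_boundary_eq_on_star {K : Finset (Finset α)} (hK : IsComplex K) {j : ℕ}
    {σ : Finset α} (hσ : IsFreeFace K σ) (hσj : #σ ≤ j) {f : Finset α → ℤ}
    (hf : IsCycle K j f) :
    ∃ g, ∀ ρ ∈ K, #ρ = j + 1 → σ ⊆ ρ → boundary K (j + 1) g ρ = f ρ := by
  obtain ⟨-, τ, hτ, -, hmax⟩ := hσ
  by_cases hτσ : τ ⊆ σ
  · exact ⟨0, fun ρ hρ hρc hσρ =>
      absurd (card_le_card ((hmax ρ hρ hσρ).trans hτσ)) (by omega)⟩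
  obtain ⟨v, hvτ, hvσ⟩ := not_subset.1 hτσ
  exact ⟨cone v f, hf.boundary_cone_eq_on_star hK hvσ fun ρ hρ hσρ =>
    hK τ hτ _ (insert_subset hvτ (hmax ρ hρ hσρ))⟩

theorem IsCycle.exists_boundary_eq_of_eq_zero_on_star {K : Finset (Finset α)} {σ : Finset α}
    {j : ℕ} (hK' : IsAcyclicAt {ρ ∈ K | ¬σ ⊆ ρ} j) {f : Finset α → ℤ} (hf : IsCycle K j f)
    (hfσ : ∀ ρ ∈ K, #ρ = j + 1 → σ ⊆ ρ → f ρ = 0) :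
    ∃ g, ∀ s ∈ K, #s = j + 1 → boundary K (j + 1) g s = f s := by
  obtain ⟨g, hg⟩ := hK' f fun t ht htc => by
    rw [boundary_filter fun s hs hsc h => hfσ s hs hsc (not_not.1 h)]
    exact hf t (mem_filter.1 ht).1 htc
  refine ⟨fun s => if σ ⊆ s then 0 else g s, fun s hs hsc => ?_⟩
  by_cases hσs : σ ⊆ s
  · rw [hfσ s hs hsc hσs]
    refine sum_eq_zero fun u hu => ?_
    dsimp only
    rw [if_pos (hσs.trans (mem_filter.1 hu).2.2), mul_zero]
  · rw [← boundary_filter (p := fun ρ => ¬σ ⊆ ρ) fun u _ _ h => if_pos (not_not.1 h),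
      boundary_congr (g := g) fun u hu _ => if_neg (mem_filter.1 hu).2]
    exact hg s (mem_filter.2 ⟨hs, hσs⟩) hsc

theorem IsAcyclicAt.of_elemCollapse {K K' : Finset (Finset α)} (hK : IsComplex K) {d j : ℕ}
    (hKK' : ElemCollapse d K K') (hdj : d ≤ j) (hK' : IsAcyclicAt K' j) : IsAcyclicAt K j := by
  obtain ⟨σ, hσ, hσd, rfl⟩ := hKK'
  intro f hf
  obtain ⟨g, hg⟩ := hf.exists_boundary_eq_on_star hK hσ (hσd.trans hdj)
  have hcyc : IsCycle K j (f - boundary K (j + 1) g) := fun t ht htc => by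
    rw [map_sub, Pi.sub_apply, hf t ht htc, boundary_boundary hK _ htc, sub_zero]
  obtain ⟨g', hg'⟩ := hcyc.exists_boundary_eq_of_eq_zero_on_star hK' fun ρ hρ hρc hσρ => by
    rw [Pi.sub_apply, hg ρ hρ hρc hσρ, sub_self]
  refine ⟨g + g', fun s hs hsc => ?_⟩
  rw [map_add, Pi.add_apply, hg' s hs hsc, Pi.sub_apply, add_sub_cancel]

theorem IsComplex.filter_subset {K : Finset (Finset α)} (hK : IsComplex K) (U : Finset α) :
    IsComplex {s ∈ K | s ⊆ U} := fun s hs t hts => by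
  rw [mem_filter] at hs ⊢
  exact ⟨hK s hs.1 t hts, hts.trans hs.2⟩

theorem IsComplex.of_elemCollapse {K K' : Finset (Finset α)} {d : ℕ} (hK : IsComplex K)
    (h : ElemCollapse d K K') : IsComplex K' := by
  obtain ⟨σ, -, -, rfl⟩ := h
  intro ρ hρ τ hτρ
  rw [mem_filter] at hρ ⊢
  exact ⟨hK ρ hρ.1 τ hτρ, fun hστ => hρ.2 (hστ.trans hτρ)⟩

theorem ElemCollapse.filter_subset {K K' : Finset (Finset α)} {d : ℕ} (hK : IsComplex K)
    (h : ElemCollapse d K K') (U : Finset α) :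
    Relation.ReflTransGen (ElemCollapse d) {s ∈ K | s ⊆ U} {s ∈ K' | s ⊆ U} := by
  obtain ⟨σ, ⟨hσ, τ, hτ, hστ, hmax⟩, hσd, rfl⟩ := h
  by_cases hσU : σ ⊆ U
  · refine .single ⟨σ, ⟨mem_filter.2 ⟨hσ, hσU⟩, τ ∩ U, ?_, subset_inter hστ hσU, ?_⟩, hσd,
      filter_comm ..⟩
    · exact mem_filter.2 ⟨hK τ hτ _ inter_subset_left, inter_subset_right⟩
    · intro ρ hρ hσρ
      rw [mem_filter] at hρ
      exact subset_inter (hmax ρ hρ.1 hσρ) hρ.2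
  · have hsame : {s ∈ K | s ⊆ U} = {s ∈ {ρ ∈ K | ¬σ ⊆ ρ} | s ⊆ U} := by
      ext s
      simp only [mem_filter]
      exact ⟨fun ⟨hs, hsU⟩ => ⟨⟨hs, fun hσs => hσU (hσs.trans hsU)⟩, hsU⟩,
        fun ⟨⟨hs, _⟩, hsU⟩ => ⟨hs, hsU⟩⟩
    rw [hsame]

theorem Collapsible.filter_subset {K : Finset (Finset α)} {d : ℕ} (hcol : Collapsible d K)
    (hK : IsComplex K) (U : Finset α) : Collapsible d {s ∈ K | s ⊆ U} := by
  induction hcol using Relation.ReflTransGen.head_induction_on with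
  | refl => rw [filter_empty]; exact .refl
  | head hstep _ ih => exact (hstep.filter_subset hK U).trans (ih (hK.of_elemCollapse hstep))

theorem Collapsible.isAcyclicAt {K : Finset (Finset α)} {d j : ℕ} (hcol : Collapsible d K)
    (hK : IsComplex K) (hdj : d ≤ j) : IsAcyclicAt K j := by
  induction hcol using Relation.ReflTransGen.head_induction_on with
  | refl => exact isAcyclicAt_empty j
  | head hstep _ ih => exact (ih (hK.of_elemCollapse hstep)).of_elemCollapse hK hstep hdj

end

theorem bdry_apply_eq_boundary {K : Finset (Finset V)} {k : ℕ} (c : chainC K (k + 1))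
    {f : Finset V → ℤ} (hf : ∀ s (hs : s ∈ K ∧ #s = k + 1), f s = c ⟨s, hs⟩)
    (t : {s : Finset V // s ∈ K ∧ #s = k}) :
    bdry K k c t = boundary K k f t := by
  rw [boundary_apply, ← filter_filter, sum_filter,
    sum_subtype {s ∈ K | #s = k + 1} fun _ => mem_filter]
  refine sum_congr rfl fun s _ => ?_
  rw [hf s.1 s.2]
  rfl

theorem subsingleton_rHomology_of_isAcyclicAt {K : Finset (Finset V)} {j : ℕ}
    (h : IsAcyclicAt K j) : Subsingleton (rHomology K j) := by
  rw [Submodule.Quotient.subsingleton_iff, eq_top_iff]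
  rintro ⟨c, hc⟩ -
  set f : Finset V → ℤ := fun s => if hs : s ∈ K ∧ #s = j + 1 then c ⟨s, hs⟩ else 0
  have hf : ∀ s (hs : s ∈ K ∧ #s = j + 1), f s = c ⟨s, hs⟩ := fun s hs => dif_pos hs
  obtain ⟨g, hg⟩ := h f fun t ht htc => by
    rw [← bdry_apply_eq_boundary c hf ⟨t, ht, htc⟩, LinearMap.mem_ker.1 hc]
    rfl
  refine ⟨fun s => g s.1, ?_⟩
  funext t
  rw [bdry_apply_eq_boundary _ (fun _ _ => rfl), hg t.1 t.2.1 t.2.2, hf t.1 t.2]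
  rfl

/-- Every `d`-collapsible complex is `d`-Leray: every induced subcomplex has
vanishing reduced homology in all dimensions `j ≥ d`. -/
theorem collapsible_is_Leray (K : Finset (Finset V)) (hK : IsComplex K) (d : ℕ)
    (hcol : Collapsible d K) :
    ∀ U : Finset V, ∀ j : ℕ, d ≤ j →
      Subsingleton (rHomology (K.filter fun s => s ⊆ U) j) := fun U _ hdj =>
  subsingleton_rHomology_of_isAcyclicAt ((hcol.filter_subset hK U).isAcyclicAt
    (hK.filter_subset U) hdj)
end

section
/- If G is a chordal graph that is not a complete graph, then G contains two non-adjacent simplicial vertices. -/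
variable {V : Type*} [Fintype V] [DecidableEq V]

open Finset


/-! Dirac's argument. For non-adjacent `a`, `b`, let `C` be the component of `b` in `G - N[a]`;
its vertex boundary `S` lies in `N(a)`. Two non-adjacent vertices of `S` would be joined by a
chordless path through `C`, which closes up through `a` to a chordless cycle of length at least 4,
so `S` is a clique. If the boundary of a vertex set `D` is a clique, then a complete graph or two
non-adjacent simplicial vertices in `G[D ∪ ∂D]` yield a simplicial vertex of `G` inside `D`.
Applying induction with `D = C` and `D = V ∖ (C ∪ S)` gives simplicial vertices on both sides of
the clique `S`, which are therefore non-adjacent. -/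

namespace SimpleGraph

variable {α β : Type*} {G : SimpleGraph α}

def vertexBoundary (G : SimpleGraph α) (D : Set α) : Set α :=
  {u | u ∉ D ∧ ∃ d ∈ D, G.Adj d u}

theorem neighborSet_subset_union_vertexBoundary {D : Set α} {d : α} (hd : d ∈ D) :
    G.neighborSet d ⊆ D ∪ G.vertexBoundary D := fun _ hu =>
  or_iff_not_imp_left.mpr fun huD => ⟨huD, d, hd, hu⟩

theorem vertexBoundary_compl_union_subset (C : Set α) :
    G.vertexBoundary (C ∪ G.vertexBoundary C)ᶜ ⊆ G.vertexBoundary C := by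
  rintro u ⟨hu, d, hd, hdu⟩
  rcases not_not.mp hu with huC | huS
  · exact absurd (Or.inr ⟨fun hdC => hd (Or.inl hdC), u, huC, hdu.symm⟩) hd
  · exact huS

theorem connected_induce_singleton (v : α) : (G.induce {v}).Connected := by
  rw [induce_singleton_eq_top]
  exact connected_top

namespace Walk

variable {u v : α}

theorem two_le_length {p : G.Walk u v} (hne : u ≠ v) (hnadj : ¬G.Adj u v) : 2 ≤ p.length := by
  rcases p with _ | ⟨h, _ | ⟨_, _⟩⟩ <;> simp_all

theorem isChordless_of_length_eq_dist {p : G.Walk u v} (hp : p.length = G.dist u v) :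
    p.IsChordless := by
  classical
  -- a subwalk of a shortest walk is shortest, so one joining adjacent vertices is a single edge
  have edge_mem : ∀ {x y : α} (q : G.Walk x y), q.IsSubwalk p → G.Adj x y → s(x, y) ∈ p.edges := by
    intro x y q hq hxy
    have hq1 : q.length = 1 :=
      (length_eq_dist_of_subwalk hp hq).trans (dist_eq_one_iff_adj.mpr hxy)
    apply hq.edges_subset
    rcases q with _ | ⟨_, _ | ⟨_, _⟩⟩ <;> simp_all
  rw [isChordless_iff_forall_mem_edges]
  intro x y hx hy hxy
  rw [← p.take_spec hx, mem_support_append_iff] at hy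
  rcases hy with hy | hy
  · rw [Sym2.eq_swap]
    exact edge_mem ((p.takeUntil x hx).dropUntil y hy)
      ((isSubwalk_dropUntil _ _).trans (isSubwalk_takeUntil _ _)) hxy.symm
  · exact edge_mem ((p.dropUntil x hx).takeUntil y hy)
      ((isSubwalk_takeUntil _ _).trans (isSubwalk_dropUntil _ _)) hxy

theorem IsChordless.map {G' : SimpleGraph β} (f : G ↪g G') {p : G.Walk u v}
    (hp : p.IsChordless) : (p.map f.toHom).IsChordless := by
  rw [isChordless_iff_forall_mem_edges] at hp ⊢
  intro x y hx hy hxy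
  rw [support_map, List.mem_map] at hx hy
  obtain ⟨x, hx, rfl⟩ := hx
  obtain ⟨y, hy, rfl⟩ := hy
  rw [edges_map]
  exact List.mem_map.mpr ⟨s(x, y), hp hx hy (f.map_adj_iff.mp hxy), rfl⟩

theorem IsPath.cons_cons_isCycle {a x y : α} {p : G.Walk x y} (hp : p.IsPath) (hax : G.Adj a x)
    (hya : G.Adj y a) (ha : a ∉ p.support) (hxy : x ≠ y) :
    (cons hya (cons hax p)).IsCycle := by
  rw [cons_isCycle_iff, cons_isPath_iff, edges_cons, List.mem_cons]
  refine ⟨⟨hp, ha⟩, ?_⟩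
  rintro (h | h)
  · grind [Sym2.eq_iff]
  · exact ha (p.snd_mem_support_of_mem_edges h)

theorem IsChordless.cons_cons {a x y : α} {p : G.Walk x y} (hp : p.IsChordless)
    (hax : G.Adj a x) (hya : G.Adj y a) (hN : ∀ z ∈ p.support, G.Adj a z → z = x ∨ z = y) :
    (cons hya (cons hax p)).IsChordless := by
  have hsupp : ∀ z ∈ (cons hya (cons hax p)).support, z = a ∨ z ∈ p.support := by
    simp only [support_cons, List.mem_cons]
    rintro z (rfl | rfl | hz)
    exacts [Or.inr p.end_mem_support, Or.inl rfl, Or.inr hz]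
  have hedge : ∀ z ∈ p.support, G.Adj a z → s(a, z) ∈ (cons hya (cons hax p)).edges := by
    intro z hz haz
    rcases hN z hz haz with rfl | rfl <;> simp [Sym2.eq_swap]
  rw [isChordless_iff_forall_mem_edges]
  intro u v hu hv huv
  rcases hsupp u hu with rfl | hu' <;> rcases hsupp v hv with rfl | hv'
  · exact (huv.ne rfl).elim
  · exact hedge v hv' huv
  · exact Sym2.eq_swap ▸ hedge u hu' huv.symm
  · exact List.mem_cons_of_mem _ (List.mem_cons_of_mem _ (hp.mem_edges hu' hv' huv))
end Walk

theorem exists_isPath_isChordless_of_reachable_induce {s : Set α} {x y : s}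
    (h : (G.induce s).Reachable x y) :
    ∃ p : G.Walk x y, p.IsPath ∧ p.IsChordless ∧ ∀ z ∈ p.support, z ∈ s := by
  obtain ⟨q, hq, hlen⟩ := h.exists_path_of_dist
  refine ⟨q.map (Embedding.induce s).toHom, hq.map Subtype.val_injective,
    (Walk.isChordless_of_length_eq_dist hlen).map _, fun z hz => ?_⟩
  obtain ⟨z, -, rfl⟩ := List.mem_map.mp (q.support_map (Embedding.induce s).toHom ▸ hz)
  exact z.2

theorem exists_connected_induce_disjoint_vertexBoundary [Finite α] {X : Set α} {b : α}
    (hb : b ∈ X) :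
    ∃ C ⊆ X, b ∈ C ∧ (G.induce C).Connected ∧ Disjoint (G.vertexBoundary C) X := by
  obtain ⟨C, hbC, hmax⟩ := Finite.exists_le_maximal
    (p := fun C : Set α => C ⊆ X ∧ (G.induce C).Connected) (a := {b})
    ⟨Set.singleton_subset_iff.mpr hb, connected_induce_singleton b⟩
  refine ⟨C, hmax.prop.1, hbC rfl, hmax.prop.2, Set.disjoint_left.mpr ?_⟩
  rintro u ⟨huC, d, hd, hdu⟩ huX
  have hext : C ∪ {u} ⊆ C := hmax.le_of_ge
    ⟨Set.union_subset hmax.prop.1 (Set.singleton_subset_iff.mpr huX),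
      connected_induce_union hmax.prop.2.preconnected (connected_induce_singleton u).preconnected
        hd rfl hdu⟩
    Set.subset_union_left
  exact huC (hext (Or.inr rfl))

theorem exists_connected_avoiding_closedNbhd [Finite α] {a b : α} (hab : a ≠ b)
    (hnadj : ¬G.Adj a b) :
    ∃ C : Set α, b ∈ C ∧ (G.induce C).Connected ∧ a ∉ C ∧ (∀ c ∈ C, ¬G.Adj a c) ∧
      G.vertexBoundary C ⊆ G.neighborSet a := by
  obtain ⟨C, hCX, hbC, hC, hdisj⟩ :=
    G.exists_connected_induce_disjoint_vertexBoundary (X := {v | v ≠ a ∧ ¬G.Adj a v})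
      ⟨hab.symm, hnadj⟩
  refine ⟨C, hbC, hC, fun haC => (hCX haC).1 rfl, fun c hc => (hCX hc).2, ?_⟩
  rintro u ⟨huC, d, hd, hdu⟩
  have hu : ¬(u ≠ a ∧ ¬G.Adj a u) := Set.disjoint_left.mp hdisj ⟨huC, d, hd, hdu⟩
  push Not at hu
  by_cases hua : u = a
  · exact absurd (hua ▸ hdu.symm) (hCX hd).2
  · exact hu hua

end SimpleGraph

open SimpleGraph

theorem IsChordal.comap {G : SimpleGraph α} {G' : SimpleGraph β} (f : G ↪g G')
    (h : IsChordal G') : IsChordal G := by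
  intro u c hc hlen
  obtain ⟨x, hx, y, hy, hxy, he⟩ := h (f u) (c.map f.toHom)
    ((Walk.isCycle_map_iff_of_injective f.injective).mpr hc) (by rwa [Walk.length_map])
  rw [Walk.support_map, List.mem_map] at hx hy
  obtain ⟨x, hx, rfl⟩ := hx
  obtain ⟨y, hy, rfl⟩ := hy
  refine ⟨x, hx, y, hy, f.map_adj_iff.mp hxy, fun hxy' => he ?_⟩
  rw [Walk.edges_map]
  exact List.mem_map.mpr ⟨s(x, y), hxy', rfl⟩

theorem IsChordal.isClique_vertexBoundary {G : SimpleGraph α} (hG : IsChordal G) {C : Set α}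
    (hC : (G.induce C).Preconnected) {a : α} (haC : a ∉ C) (hanti : ∀ c ∈ C, ¬G.Adj a c)
    (hbdry : G.vertexBoundary C ⊆ G.neighborSet a) : G.IsClique (G.vertexBoundary C) := by
  intro x hx y hy hxy
  by_contra hnadj
  have hax : G.Adj a x := hbdry hx
  have hay : G.Adj a y := hbdry hy
  obtain ⟨-, cx, hcx, hcxx⟩ := hx
  obtain ⟨-, cy, hcy, hcyy⟩ := hy
  have hCx : (G.induce (C ∪ {x})).Connected :=
    connected_induce_union hC (connected_induce_singleton x).preconnected hcx rfl hcxx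
  have hconn : (G.induce (C ∪ {x} ∪ {y})).Connected :=
    connected_induce_union hCx.preconnected (connected_induce_singleton y).preconnected
      (Or.inl hcy) rfl hcyy
  obtain ⟨p, hp, hpc, hps⟩ := exists_isPath_isChordless_of_reachable_induce
    (hconn.preconnected ⟨x, Or.inl (Or.inr rfl)⟩ ⟨y, Or.inr rfl⟩)
  have hap : a ∉ p.support := fun ha => by
    rcases hps a ha with (h | rfl) | rfl
    exacts [haC h, hax.ne rfl, hay.ne rfl]
  have hNp : ∀ z ∈ p.support, G.Adj a z → z = x ∨ z = y := fun z hz haz => by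
    rcases hps z hz with (h | rfl) | rfl
    exacts [absurd haz (hanti z h), Or.inl rfl, Or.inr rfl]
  have hchordless := hpc.cons_cons hax hay.symm hNp
  obtain ⟨u, hu, v, hv, huv, hne⟩ := hG y _ (hp.cons_cons_isCycle hax hay.symm hap hxy)
    (by simp [p.two_le_length hxy hnadj])
  exact hne (hchordless.mem_edges hu hv huv)

theorem isSimplicialVtx_top (v : α) : IsSimplicialVtx (⊤ : SimpleGraph α) v :=
  fun _ _ _ _ hxy => hxy

theorem IsSimplicialVtx.of_induce {G : SimpleGraph α} {s : Set α} {v : s}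
    (h : IsSimplicialVtx (G.induce s) v) (hN : G.neighborSet v ⊆ s) : IsSimplicialVtx G v :=
  fun x y hx hy hxy => h ⟨x, hN hx⟩ ⟨y, hN hy⟩ hx hy (by simpa using hxy)

theorem exists_isSimplicialVtx_mem {G : SimpleGraph α} {D : Set α} (hD : D.Nonempty)
    (hS : G.IsClique (G.vertexBoundary D))
    (h : G.induce (D ∪ G.vertexBoundary D) = ⊤ ∨
      ∃ v w, v ≠ w ∧ ¬(G.induce (D ∪ G.vertexBoundary D)).Adj v w ∧
        IsSimplicialVtx (G.induce (D ∪ G.vertexBoundary D)) v ∧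
        IsSimplicialVtx (G.induce (D ∪ G.vertexBoundary D)) w) :
    ∃ v ∈ D, IsSimplicialVtx G v := by
  have lift : ∀ v : ↥(D ∪ G.vertexBoundary D), (v : α) ∈ D →
      IsSimplicialVtx (G.induce (D ∪ G.vertexBoundary D)) v → IsSimplicialVtx G v :=
    fun v hv hsimp => hsimp.of_induce (neighborSet_subset_union_vertexBoundary hv)
  rcases h with htop | ⟨v, w, hvw, hnadj, hv, hw⟩
  · obtain ⟨d, hd⟩ := hD
    exact ⟨d, hd, lift ⟨d, Or.inl hd⟩ hd (htop ▸ isSimplicialVtx_top _)⟩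
  · have hvwD : (v : α) ∈ D ∨ (w : α) ∈ D := by
      by_contra! hout
      exact hnadj (hS (v.2.resolve_left hout.1) (w.2.resolve_left hout.2)
        (Subtype.coe_ne_coe.mpr hvw))
    rcases hvwD with hvD | hwD
    exacts [⟨v, hvD, lift v hvD hv⟩, ⟨w, hwD, lift w hwD hw⟩]

theorem IsChordal.eq_top_or_exists_nonadj_simplicial [Finite α] {G : SimpleGraph α}
    (hG : IsChordal G) :
    G = ⊤ ∨ ∃ v w, v ≠ w ∧ ¬G.Adj v w ∧ IsSimplicialVtx G v ∧ IsSimplicialVtx G w := by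
  induction h : Nat.card α using Nat.strong_induction_on generalizing α with
  | _ n ih =>
  have ih' : ∀ (s : Set α) (z : α), z ∉ s → G.induce s = ⊤ ∨ ∃ v w, v ≠ w ∧
      ¬(G.induce s).Adj v w ∧ IsSimplicialVtx (G.induce s) v ∧ IsSimplicialVtx (G.induce s) w :=
    fun s z hz => ih _ (h ▸ Finite.card_subtype_lt hz) (hG.comap (Embedding.induce s)) rfl
  refine or_iff_not_imp_left.mpr fun hne => ?_
  obtain ⟨a, b, hab, hnadj⟩ : ∃ a b, a ≠ b ∧ ¬G.Adj a b := by
    by_contra! hcomplete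
    exact hne (by ext u v; exact ⟨Adj.ne, hcomplete u v⟩)
  obtain ⟨C, hbC, hC, haC, hanti, hbdry⟩ := exists_connected_avoiding_closedNbhd hab hnadj
  have hS := hG.isClique_vertexBoundary hC.preconnected haC hanti hbdry
  have haS : a ∉ G.vertexBoundary C := fun ha => (hbdry ha).ne rfl
  obtain ⟨w, hwC, hw⟩ := exists_isSimplicialVtx_mem ⟨b, hbC⟩ hS
    (ih' _ a (by simp [haC, haS]))
  have hbD : b ∉ (C ∪ G.vertexBoundary C)ᶜ ∪ G.vertexBoundary (C ∪ G.vertexBoundary C)ᶜ := by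
    rintro (hb | hb)
    · exact hb (Or.inl hbC)
    · exact (vertexBoundary_compl_union_subset C hb).1 hbC
  obtain ⟨v, hvD, hv⟩ := exists_isSimplicialVtx_mem ⟨a, by simp [haC, haS]⟩
    (hS.subset (vertexBoundary_compl_union_subset C)) (ih' _ b hbD)
  refine ⟨v, w, ?_, fun hvw => hvD (Or.inr ⟨fun hvC => hvD (Or.inl hvC), w, hwC, hvw.symm⟩),
    hv, hw⟩
  rintro rfl
  exact hvD (Or.inl hwC)

/-- A chordal graph which is not complete has two non-adjacent simplicial
vertices. -/
theorem chordal_two_nonadjacent_simplicial (G : SimpleGraph V) (hG : IsChordal G)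
    (hnc : ∃ u v : V, u ≠ v ∧ ¬ G.Adj u v) :
    ∃ v w : V, v ≠ w ∧ ¬ G.Adj v w ∧ IsSimplicialVtx G v ∧ IsSimplicialVtx G w := by
  obtain ⟨u, v, huv, hnadj⟩ := hnc
  refine hG.eq_top_or_exists_nonadj_simplicial.resolve_left ?_
  rintro rfl
  exact hnadj huv
end
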